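/- arXiv:2412.07207 — 3 statements merged into one kernel-verified Lean document; each statement's English description precedes it below -/
import Mathlib

section
/- Fix p, Y0, Y1 ∈ [0,1] and K ≥ 1, let r = p·(1−Y0−Y1) + Y0, and assume r ≠ 1. In the probabilistic query model, the probability of the event that there exists i < K with O_i = true, A_i = true, and O_j = false for all j < i (i.e., the first oracle-accepted query among the top K is answerable) equals p·Y1·(1 − r^K)/(1 − r). In particular, the Query Success Rate of the Oracle-guided Active Query Selection (OAQS) strategy, which returns the first query among the top K whose oracle verdict is true, is p·Y1·(1 − r^K)/(1 − r). -/
open MeasureTheory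

/-- **Proposition 3 (QSR of OAQS).** Fix `p, Y0, Y1 ∈ [0,1]` and `K ≥ 1`, let
`r = p·(1−Y0−Y1) + Y0`, and assume `r ≠ 1`. In the probabilistic query model — `K` i.i.d. pairs
`(A_i, O_i)` with `P(A=true, O=true) = p·Y1`, `P(A=true, O=false) = p·(1−Y1)`,
`P(A=false, O=true) = (1−p)·(1−Y0)`, `P(A=false, O=false) = (1−p)·Y0` — the probability of the
event that there exists `i < K` with `O_i = true`, `A_i = true`, and `O_j = false` for all
`j < i` (i.e., the first oracle-accepted query among the top `K` is answerable) equals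
`p·Y1·(1 − r^K)/(1 − r)`.  This is the Query Success Rate of the Oracle-guided Active Query
Selection (OAQS) strategy, which returns the first query among the top `K` whose oracle verdict
is `true`. -/
theorem oaqs_qsr (p Y0 Y1 : ℝ) (hp : p ∈ Set.Icc (0 : ℝ) 1)
    (hY0 : Y0 ∈ Set.Icc (0 : ℝ) 1) (hY1 : Y1 ∈ Set.Icc (0 : ℝ) 1)
    (K : ℕ) (hK : 1 ≤ K)
    (r : ℝ) (hr : r = p * (1 - Y0 - Y1) + Y0) (hr1 : r ≠ 1)
    (μ : Measure (Bool × Bool)) [IsProbabilityMeasure μ]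
    (htt : μ {(true, true)} = ENNReal.ofReal (p * Y1))
    (htf : μ {(true, false)} = ENNReal.ofReal (p * (1 - Y1)))
    (hft : μ {(false, true)} = ENNReal.ofReal ((1 - p) * (1 - Y0)))
    (hff : μ {(false, false)} = ENNReal.ofReal ((1 - p) * Y0)) :
    Measure.pi (fun _ : Fin K => μ)
      {ω | ∃ i : Fin K, (ω i).2 = true ∧ (ω i).1 = true ∧
        ∀ j : Fin K, j < i → (ω j).2 = false} =
      ENNReal.ofReal (p * Y1 * (1 - r ^ K) / (1 - r)) := by

  obtain ⟨hp0, hp1⟩ := hp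
  obtain ⟨hY00, hY01⟩ := hY0
  obtain ⟨hY10, hY11⟩ := hY1
  have hrr : r = p * (1 - Y1) + (1 - p) * Y0 := by rw [hr]; ring
  have hr0 : 0 ≤ r := by nlinarith
  have hrle : r ≤ 1 := by nlinarith
  have hrlt : r < 1 := lt_of_le_of_ne hrle hr1
  have hpY1 : 0 ≤ p * Y1 := by positivity
  have hμO : μ {b : Bool × Bool | b.2 = false} = ENNReal.ofReal r := by
    have hs : {b : Bool × Bool | b.2 = false} = {(true, false)} ∪ {(false, false)} := by
      ext ⟨a, o⟩; cases a <;> cases o <;> simp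
    have hd : Disjoint ({(true, false)} : Set (Bool × Bool)) {(false, false)} := by
      simp
    rw [hs, measure_union hd ((Set.to_countable _).measurableSet), htf, hff,
      ← ENNReal.ofReal_add (by nlinarith) (by nlinarith), hrr]
  set S : Fin K → Fin K → Set (Bool × Bool) := fun i k =>
    if k = i then {(true, true)} else if k < i then {b | b.2 = false} else Set.univ
    with hS
  set E : Fin K → Set (Fin K → Bool × Bool) := fun i => Set.univ.pi (S i) with hE
  have hEmeas : ∀ i, MeasurableSet (E i) := fun i =>
    MeasurableSet.univ_pi fun k => (Set.to_countable _).measurableSet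
  have hset : {ω : Fin K → Bool × Bool | ∃ i : Fin K, (ω i).2 = true ∧ (ω i).1 = true ∧
      ∀ j : Fin K, j < i → (ω j).2 = false} = ⋃ i, E i := by
    ext ω
    simp only [Set.mem_setOf_eq, Set.mem_iUnion, hE, Set.mem_pi, Set.mem_univ, true_implies]
    constructor
    · rintro ⟨i, hO, hA, hj⟩
      refine ⟨i, fun k => ?_⟩
      rw [hS]
      dsimp only
      split_ifs with h1 h2
      · subst h1
        have : ω k = (true, true) := Prod.ext hA hO
        simp [this]
      · exact hj k h2
      · trivial
    · rintro ⟨i, hk⟩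
      have hi := hk i
      rw [hS] at hi
      simp only [if_pos rfl, Set.mem_singleton_iff] at hi
      refine ⟨i, by rw [hi], by rw [hi], fun j hj => ?_⟩
      have hjj := hk j
      rw [hS] at hjj
      simp only [if_neg (ne_of_lt hj), if_pos hj, Set.mem_setOf_eq] at hjj
      exact hjj
  have key : ∀ i j : Fin K, i < j → Disjoint (E i) (E j) := by
    intro i j hij
    rw [Set.disjoint_left]
    intro ω h1 h2
    have hi := h1 i (Set.mem_univ i)
    have hj := h2 i (Set.mem_univ i)
    rw [hS] at hi hj
    simp only [if_pos rfl, Set.mem_singleton_iff] at hi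
    simp only [if_neg (ne_of_lt hij), if_pos hij, Set.mem_setOf_eq] at hj
    rw [hi] at hj
    simp at hj
  have hdisj : Pairwise (Function.onFun Disjoint E) := fun i j hij =>
    hij.lt_or_gt.elim (key i j) fun h => (key j i h).symm
  have hEi : ∀ i : Fin K, Measure.pi (fun _ : Fin K => μ) (E i)
      = ENNReal.ofReal (p * Y1 * r ^ (i : ℕ)) := by
    intro i
    rw [hE]
    dsimp only
    rw [Measure.pi_pi]
    have hval : ∀ k : Fin K, μ (S i k) =
        if k = i then ENNReal.ofReal (p * Y1) else if k < i then ENNReal.ofReal r else 1 := by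
      intro k
      rw [hS]
      dsimp only
      split_ifs
      · exact htt
      · exact hμO
      · simp
    calc ∏ k : Fin K, μ (S i k)
        = ∏ k : Fin K, (if k = i then ENNReal.ofReal (p * Y1)
            else if k < i then ENNReal.ofReal r else 1) := by
          exact Finset.prod_congr rfl fun k _ => hval k
      _ = ENNReal.ofReal (p * Y1) * ∏ k ∈ Finset.univ.erase i,
            (if k = i then ENNReal.ofReal (p * Y1)
            else if k < i then ENNReal.ofReal r else 1) := by
          rw [← Finset.mul_prod_erase Finset.univ _ (Finset.mem_univ i), if_pos rfl]
      _ = ENNReal.ofReal (p * Y1) * ∏ k ∈ Finset.univ.erase i,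
            (if k < i then ENNReal.ofReal r else 1) := by
          congr 1
          exact Finset.prod_congr rfl fun k hk => by
            rw [if_neg (Finset.ne_of_mem_erase hk)]
      _ = ENNReal.ofReal (p * Y1) * ENNReal.ofReal r ^ (i : ℕ) := by
          congr 1
          rw [← Finset.prod_filter]
          rw [Finset.prod_const]
          congr 1
          have hfil : (Finset.univ.erase i).filter (fun k => k < i) = Finset.Iio i := by
            ext k
            simp only [Finset.mem_filter, Finset.mem_erase, Finset.mem_univ, and_true,
              Finset.mem_Iio, true_and]
            exact ⟨fun h => h.2, fun h => ⟨ne_of_lt h, h⟩⟩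
          rw [hfil, Fin.card_Iio]
      _ = ENNReal.ofReal (p * Y1 * r ^ (i : ℕ)) := by
          rw [← ENNReal.ofReal_pow hr0, ← ENNReal.ofReal_mul hpY1]
  rw [hset, measure_iUnion hdisj hEmeas, tsum_fintype]
  simp_rw [hEi]
  rw [← ENNReal.ofReal_sum_of_nonneg (fun i _ => by positivity)]
  congr 1
  rw [Fin.sum_univ_eq_sum_range (fun i => p * Y1 * r ^ i) K, ← Finset.mul_sum,
    geom_sum_eq hr1 K]
  have h1r : (1 : ℝ) - r ≠ 0 := sub_ne_zero.mpr (Ne.symm hr1)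
  have hr1' : r - 1 ≠ 0 := sub_ne_zero.mpr hr1
  field_simp
  ring
end

section
/- Let p ∈ (0,1) and Y0, Y1 ∈ [0,1], and set r = p·(1−Y0−Y1) + Y0; assume r < 1. Then the limiting Query Success Rate of OAQS exceeds that of the random and top-query selection strategies, i.e., p·Y1/(1 − r) > p, if and only if Y0 + Y1 > 1. -/
/-- **Corollary 1.** Let `p ∈ (0,1)` and `Y0, Y1 ∈ [0,1]`, and set `r = p·(1−Y0−Y1) + Y0`;
assume `r < 1`. Then the limiting Query Success Rate of OAQS exceeds that of the random and
top-query selection strategies (both of which equal `p`), i.e., `p·Y1/(1 − r) > p`, if and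
only if `Y0 + Y1 > 1`. -/
theorem oaqs_beats_baselines_iff (p Y0 Y1 : ℝ) (hp : p ∈ Set.Ioo (0 : ℝ) 1)
    (hY0 : Y0 ∈ Set.Icc (0 : ℝ) 1) (hY1 : Y1 ∈ Set.Icc (0 : ℝ) 1)
    (r : ℝ) (hr : r = p * (1 - Y0 - Y1) + Y0) (hr1 : r < 1) :
    p * Y1 / (1 - r) > p ↔ Y0 + Y1 > 1 := by
  obtain ⟨hp0, hp1⟩ := hp
  have h1r : 0 < 1 - r := by linarith
  rw [gt_iff_lt, lt_div_iff₀ h1r]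
  subst hr
  constructor <;> intro h <;> nlinarith [mul_pos hp0 (sub_pos.mpr hp1), mul_pos (sub_pos.mpr hp1) (sub_pos.mpr h)]
end

section
/- Fix p, Y0, Y1 ∈ [0,1] and K ≥ 1, let s = (1−p)·Y0, and assume s ≠ 1. In the probabilistic query model, the probability of the event that there exists i < K with A_i = true, O_i = true, and A_j = false and O_j = false for all j < i (i.e., the highest-ranked answerable query occurs within the top K, every higher-ranked query is unanswerable and rejected by the oracle, and the oracle accepts the highest-ranked answerable query) equals p·Y1·(1 − s^K)/(1 − s). In particular, the Optimal Query Success Rate of the Oracle-guided Active Query Selection (OAQS) strategy is p·Y1·(1 − ((1−p)·Y0)^K)/(1 − (1−p)·Y0). -/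
open MeasureTheory

/-- **Proposition 6 (OQSR of OAQS).** Fix `p, Y0, Y1 ∈ [0,1]` and `K ≥ 1`, let
`s = (1−p)·Y0`, and assume `s ≠ 1`. In the probabilistic query model — `K` i.i.d. pairs
`(A_i, O_i)` with `P(A=true, O=true) = p·Y1`, `P(A=true, O=false) = p·(1−Y1)`,
`P(A=false, O=true) = (1−p)·(1−Y0)`, `P(A=false, O=false) = (1−p)·Y0` — the probability of the
event that there exists `i < K` with `A_i = true`, `O_i = true`, and `A_j = false` and
`O_j = false` for all `j < i` (i.e., the highest-ranked answerable query occurs within the top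
`K`, every higher-ranked query is unanswerable and rejected by the oracle, and the oracle
accepts the highest-ranked answerable query) equals `p·Y1·(1 − s^K)/(1 − s)`. This is the
Optimal Query Success Rate of the OAQS strategy. -/
theorem oaqs_oqsr (p Y0 Y1 : ℝ) (hp : p ∈ Set.Icc (0 : ℝ) 1)
    (hY0 : Y0 ∈ Set.Icc (0 : ℝ) 1) (hY1 : Y1 ∈ Set.Icc (0 : ℝ) 1)
    (K : ℕ) (hK : 1 ≤ K)
    (s : ℝ) (hs : s = (1 - p) * Y0) (hs1 : s ≠ 1)
    (μ : Measure (Bool × Bool)) [IsProbabilityMeasure μ]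
    (htt : μ {(true, true)} = ENNReal.ofReal (p * Y1))
    (htf : μ {(true, false)} = ENNReal.ofReal (p * (1 - Y1)))
    (hft : μ {(false, true)} = ENNReal.ofReal ((1 - p) * (1 - Y0)))
    (hff : μ {(false, false)} = ENNReal.ofReal ((1 - p) * Y0)) :
    Measure.pi (fun _ : Fin K => μ)
      {ω | ∃ i : Fin K, (ω i).1 = true ∧ (ω i).2 = true ∧
        ∀ j : Fin K, j < i → (ω j).1 = false ∧ (ω j).2 = false} =
      ENNReal.ofReal (p * Y1 * (1 - s ^ K) / (1 - s)) := by
  obtain ⟨hp0, hp1⟩ := hp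
  obtain ⟨hY00, hY01⟩ := hY0
  obtain ⟨hY10, hY11⟩ := hY1
  have hpY1 : 0 ≤ p * Y1 := mul_nonneg hp0 hY10
  have hs0 : 0 ≤ s := by rw [hs]; exact mul_nonneg (by linarith) hY00
  have hslt : s < 1 := lt_of_le_of_ne (by nlinarith [hs]) hs1
  have hffs : μ {((false : Bool), (false : Bool))} = ENNReal.ofReal s := by
    rw [hff, hs]
  -- The sets in the disjoint decomposition
  set S : Fin K → Fin K → Set (Bool × Bool) := fun i j =>
    if j < i then {(false, false)} else if j = i then {(true, true)} else Set.univ with hS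
  have hSm : ∀ i j, MeasurableSet (S i j) := by
    intro i j
    simp only [hS]
    split
    · exact MeasurableSet.singleton _
    · split
      · exact MeasurableSet.singleton _
      · exact MeasurableSet.univ
  have hE : {ω : Fin K → Bool × Bool | ∃ i : Fin K, (ω i).1 = true ∧ (ω i).2 = true ∧
        ∀ j : Fin K, j < i → (ω j).1 = false ∧ (ω j).2 = false} =
      ⋃ i : Fin K, Set.pi Set.univ (S i) := by
    ext ω
    simp only [Set.mem_setOf_eq, Set.mem_iUnion, Set.mem_pi, Set.mem_univ, true_implies]
    constructor
    · rintro ⟨i, h1, h2, h3⟩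
      refine ⟨i, fun j => ?_⟩
      simp only [hS]
      by_cases hji : j < i
      · simp only [if_pos hji, Set.mem_singleton_iff, Prod.ext_iff]
        exact h3 j hji
      · by_cases hji' : j = i
        · subst hji'
          simp only [if_neg hji, if_pos rfl, Set.mem_singleton_iff]
          exact Prod.ext_iff.mpr ⟨h1, h2⟩
        · simp [if_neg hji, if_neg hji']
    · rintro ⟨i, h⟩
      have hi := h i
      simp only [hS, lt_irrefl, if_false, if_pos rfl, if_true, Set.mem_singleton_iff,
        Prod.ext_iff] at hi
      refine ⟨i, hi.1, hi.2, fun j hji => ?_⟩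
      have hj := h j
      simp only [hS, if_pos hji, Set.mem_singleton_iff, Prod.ext_iff] at hj
      exact hj
  have hdisj : Pairwise (Function.onFun Disjoint fun i : Fin K => Set.pi Set.univ (S i)) := by
    intro i i' hne
    rcases hne.lt_or_gt with hlt | hlt
    · refine Set.disjoint_left.mpr fun ω hωi hωi' => ?_
      have h1 := hωi i (Set.mem_univ i)
      have h2 := hωi' i (Set.mem_univ i)
      simp only [hS, lt_irrefl, if_false, if_pos rfl, if_pos hlt,
        Set.mem_singleton_iff] at h1 h2
      rw [h1] at h2; exact absurd h2 (by simp [Prod.ext_iff])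
    · refine Set.disjoint_left.mpr fun ω hωi hωi' => ?_
      have h1 := hωi i' (Set.mem_univ i')
      have h2 := hωi' i' (Set.mem_univ i')
      simp only [hS, lt_irrefl, if_false, if_pos rfl, if_pos hlt,
        Set.mem_singleton_iff] at h1 h2
      rw [h1] at h2; exact absurd h2 (by simp [Prod.ext_iff])
  have hmeas : ∀ i : Fin K, MeasurableSet (Set.pi Set.univ (S i)) :=
    fun i => MeasurableSet.univ_pi (hSm i)
  rw [hE, measure_iUnion hdisj hmeas, tsum_fintype]
  have hval : ∀ i : Fin K,
      Measure.pi (fun _ : Fin K => μ) (Set.pi Set.univ (S i)) =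
        ENNReal.ofReal (p * Y1 * s ^ (i : ℕ)) := by
    intro i
    rw [Measure.pi_pi]
    have : ∀ j : Fin K, μ (S i j) =
        if j < i then ENNReal.ofReal s else if j = i then ENNReal.ofReal (p * Y1) else 1 := by
      intro j
      simp only [hS]
      split
      · exact hffs
      · split
        · exact htt
        · exact measure_univ
    rw [Finset.prod_congr rfl (fun j _ => this j)]
    rw [Finset.prod_ite]
    have h2 : (∏ j ∈ Finset.univ.filter (fun j => ¬ j < i),
        if j = i then ENNReal.ofReal (p * Y1) else 1) = ENNReal.ofReal (p * Y1) := by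
      rw [Finset.prod_ite_eq' _ i (fun _ => ENNReal.ofReal (p * Y1))]
      simp
    rw [h2, Finset.prod_const]
    have hcard : (Finset.univ.filter (fun j => j < i)).card = (i : ℕ) := by
      have : Finset.univ.filter (fun j => j < i) = Finset.Iio i := by
        ext j; simp
      rw [this, Fin.card_Iio]
    rw [hcard, ← ENNReal.ofReal_pow hs0, ← ENNReal.ofReal_mul (pow_nonneg hs0 _)]
    congr 1
    ring
  rw [Finset.sum_congr rfl (fun i _ => hval i),
    Fin.sum_univ_eq_sum_range (fun n => ENNReal.ofReal (p * Y1 * s ^ n)) K]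
  rw [← ENNReal.ofReal_sum_of_nonneg (fun i _ => by positivity)]
  congr 1
  rw [← Finset.mul_sum, geom_sum_eq hs1]
  have h1s : (1 : ℝ) - s ≠ 0 := sub_ne_zero.mpr (Ne.symm hs1)
  have h2s : s - 1 ≠ 0 := sub_ne_zero.mpr hs1
  field_simp [h1s, h2s]
  ring
end
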